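/- arXiv:2206.05556 — 2 statements merged into one kernel-verified Lean document; each statement's English description precedes it below -/
import Mathlib

section
/- Let ρ, u : [0,T] × ℝ → ℝ be C² with ρ > 0 everywhere, and suppose they satisfy the 1-D isentropic compressible Navier–Stokes equations ρ_t + (ρu)_x = 0 and (ρu)_t + (ρu²)_x + (Aρ^γ)_x = (αρ^δ u_x)_x, where A, α > 0, γ > 1, 0 < δ ≤ 1. Define the effective velocity v = u + α ρ^{δ−2} ρ_x. Then v satisfies pointwise the transport equation v_t + u v_x + (Aγ/α) ρ^{γ−δ} v = (Aγ/α) ρ^{γ−δ} u. -/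
/-!
Write `v = u + w` with the drift `w = α ρ^(δ-2) ρ_x = φ(ρ)_x`. The mass equation, expanded and
differentiated in `x`, gives the material derivative of the drift:
`w_t + u w_x = -α δ ρ^(δ-2) ρ_x u_x - α ρ^(δ-1) u_xx`.
Up to sign this is the viscous term of the momentum equation written in non-conservative form
and divided by `ρ`, namely
`u_t + u u_x + A γ ρ^(γ-2) ρ_x = α δ ρ^(δ-2) ρ_x u_x + α ρ^(δ-1) u_xx`.
Adding the two, the viscosity cancels and only the pressure term
`A γ ρ^(γ-2) ρ_x = (A γ / α) ρ^(γ-δ) (v - u)` survives.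
-/

open Function

section PartialDerivatives

variable {E : Type*} [NormedAddCommGroup E] [NormedSpace ℝ E] {G : ℝ × ℝ → E} {t x : ℝ}

theorem DifferentiableAt.hasDerivAt_partial_left (hG : DifferentiableAt ℝ G (t, x)) :
    HasDerivAt (fun s => G (s, x)) (fderiv ℝ G (t, x) (1, 0)) t :=
  hG.hasFDerivAt.comp_hasDerivAt t ((hasDerivAt_id t).prodMk (hasDerivAt_const t x))

theorem DifferentiableAt.hasDerivAt_partial_right (hG : DifferentiableAt ℝ G (t, x)) :
    HasDerivAt (fun y => G (t, y)) (fderiv ℝ G (t, x) (0, 1)) x :=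
  hG.hasFDerivAt.comp_hasDerivAt x ((hasDerivAt_const x t).prodMk (hasDerivAt_id x))

variable {f : ℝ → ℝ → ℝ}

theorem Differentiable.differentiableAt_partial_left (hf : Differentiable ℝ (uncurry f))
    (t x : ℝ) :
    DifferentiableAt ℝ (fun s => f s x) t :=
  (hf (t, x)).hasDerivAt_partial_left.differentiableAt

theorem Differentiable.differentiableAt_partial_right (hf : Differentiable ℝ (uncurry f))
    (t x : ℝ) :
    DifferentiableAt ℝ (fun y => f t y) x :=
  (hf (t, x)).hasDerivAt_partial_right.differentiableAt

theorem uncurry_deriv_partial_left_eq_fderiv (hf : Differentiable ℝ (uncurry f)) :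
    uncurry (fun (a b : ℝ) => deriv (fun s : ℝ => f s b) a)
      = fun p => fderiv ℝ (uncurry f) p (1, 0) :=
  funext fun p => (hf p).hasDerivAt_partial_left.deriv

theorem uncurry_deriv_partial_right_eq_fderiv (hf : Differentiable ℝ (uncurry f)) :
    uncurry (fun (a b : ℝ) => deriv (fun y : ℝ => f a y) b)
      = fun p => fderiv ℝ (uncurry f) p (0, 1) :=
  funext fun p => (hf p).hasDerivAt_partial_right.deriv

variable {n : WithTop ℕ∞}

theorem ContDiff.contDiff_deriv_partial_left (hf : ContDiff ℝ (n + 1) (uncurry f)) :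
    ContDiff ℝ n (uncurry fun (a b : ℝ) => deriv (fun s : ℝ => f s b) a) := by
  rw [uncurry_deriv_partial_left_eq_fderiv (hf.differentiable (by simp))]
  exact (hf.fderiv_right le_rfl).clm_apply contDiff_const

theorem ContDiff.contDiff_deriv_partial_right (hf : ContDiff ℝ (n + 1) (uncurry f)) :
    ContDiff ℝ n (uncurry fun (a b : ℝ) => deriv (fun y : ℝ => f a y) b) := by
  rw [uncurry_deriv_partial_right_eq_fderiv (hf.differentiable (by simp))]
  exact (hf.fderiv_right le_rfl).clm_apply contDiff_const

theorem ContDiff.deriv_partial_comm (hf : ContDiff ℝ 2 (uncurry f)) (t x : ℝ) :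
    deriv (fun s => deriv (fun y => f s y) x) t
      = deriv (fun y => deriv (fun s => f s y) t) x := by
  have hf' : Differentiable ℝ (uncurry f) := hf.differentiable (by simp)
  have hD : Differentiable ℝ (fderiv ℝ (uncurry f)) :=
    (hf.fderiv_right (m := 1) le_rfl).differentiable (by simp)
  have hleft := (hD (t, x)).hasDerivAt_partial_left.clm_apply
    (hasDerivAt_const t ((0 : ℝ), (1 : ℝ)))
  have hright := (hD (t, x)).hasDerivAt_partial_right.clm_apply
    (hasDerivAt_const x ((1 : ℝ), (0 : ℝ)))
  simp only [map_zero, add_zero] at hleft hright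
  rw [show (fun s => deriv (fun y => f s y) x) = fun s => fderiv ℝ (uncurry f) (s, x) (0, 1) from
      funext fun s => (hf' (s, x)).hasDerivAt_partial_right.deriv,
    show (fun y => deriv (fun s => f s y) t) = fun y => fderiv ℝ (uncurry f) (t, y) (1, 0) from
      funext fun y => (hf' (t, y)).hasDerivAt_partial_left.deriv, hleft.deriv, hright.deriv]
  exact (hf.contDiffAt.isSymmSndFDerivAt (by simp)) _ _

end PartialDerivatives

section NavierStokes

variable {A α γ δ : ℝ} {ρ u : ℝ → ℝ → ℝ}

theorem mass_equation_expanded (hρ : Differentiable ℝ (uncurry ρ))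
    (hu : Differentiable ℝ (uncurry u))
    (mass : ∀ t x, deriv (fun s => ρ s x) t + deriv (fun y => ρ t y * u t y) x = 0)
    (t x : ℝ) :
    deriv (fun s => ρ s x) t
      + (deriv (fun y => ρ t y) x * u t x + ρ t x * deriv (fun y => u t y) x) = 0 := by
  rw [← deriv_fun_mul (hρ.differentiableAt_partial_right t x)
    (hu.differentiableAt_partial_right t x)]
  exact mass t x

theorem deriv_right_mass_equation_expanded (hρ : ContDiff ℝ 2 (uncurry ρ))
    (hu : ContDiff ℝ 2 (uncurry u))
    (mass : ∀ t x, deriv (fun s => ρ s x) t + deriv (fun y => ρ t y * u t y) x = 0)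
    (t x : ℝ) :
    deriv (fun y => deriv (fun s => ρ s y) t) x
      + deriv (fun y => deriv (fun z => ρ t z) y) x * u t x
      + 2 * deriv (fun y => ρ t y) x * deriv (fun y => u t y) x
      + ρ t x * deriv (fun y => deriv (fun z => u t z) y) x = 0 := by
  have hρ1 : Differentiable ℝ (uncurry ρ) := hρ.differentiable (by simp)
  have hu1 : Differentiable ℝ (uncurry u) := hu.differentiable (by simp)
  have hρt := (hρ.contDiff_deriv_partial_left (n := 1)).differentiable (by simp)
  have hρx := (hρ.contDiff_deriv_partial_right (n := 1)).differentiable (by simp)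
  have hux := (hu.contDiff_deriv_partial_right (n := 1)).differentiable (by simp)
  have hd := (hρt.differentiableAt_partial_right t x).hasDerivAt.fun_add
    (((hρx.differentiableAt_partial_right t x).hasDerivAt.fun_mul
      (hu1.differentiableAt_partial_right t x).hasDerivAt).fun_add
    ((hρ1.differentiableAt_partial_right t x).hasDerivAt.fun_mul
      (hux.differentiableAt_partial_right t x).hasDerivAt))
  rw [show (fun y => _) = fun _ => (0 : ℝ) from
    funext (mass_equation_expanded hρ1 hu1 mass t)] at hd
  linear_combination hd.unique (hasDerivAt_const x (0 : ℝ))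

theorem momentum_equation_nonconservative (hpos : ∀ t x, 0 < ρ t x)
    (hρ : Differentiable ℝ (uncurry ρ)) (hu : ContDiff ℝ 2 (uncurry u))
    (mass : ∀ t x, deriv (fun s => ρ s x) t + deriv (fun y => ρ t y * u t y) x = 0)
    (mom : ∀ t x, deriv (fun s => ρ s x * u s x) t
        + deriv (fun y => ρ t y * u t y ^ 2) x
        + deriv (fun y => A * ρ t y ^ γ) x
        = deriv (fun y => α * ρ t y ^ δ * deriv (fun z => u t z) y) x) (t x : ℝ) :
    deriv (fun s => u s x) t + u t x * deriv (fun y => u t y) x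
      + A * γ * ρ t x ^ (γ - δ) * ρ t x ^ (δ - 2) * deriv (fun y => ρ t y) x
      = α * δ * ρ t x ^ (δ - 2) * deriv (fun y => ρ t y) x * deriv (fun y => u t y) x
        + α * ρ t x ^ (δ - 2) * ρ t x * deriv (fun y => deriv (fun z => u t z) y) x := by
  have hρ0 : ρ t x ≠ 0 := (hpos t x).ne'
  have hu1 : Differentiable ℝ (uncurry u) := hu.differentiable (by simp)
  have hux := (hu.contDiff_deriv_partial_right (n := 1)).differentiable (by simp)
  have hρt := (hρ.differentiableAt_partial_left t x).hasDerivAt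
  have hut := (hu1.differentiableAt_partial_left t x).hasDerivAt
  have hρx := (hρ.differentiableAt_partial_right t x).hasDerivAt
  have hρδ := (hρx.rpow_const (p := δ) (Or.inl hρ0)).const_mul α
  have h := mom t x
  rw [(hρt.fun_mul hut).deriv,
    (hρx.fun_mul ((hu1.differentiableAt_partial_right t x).hasDerivAt.fun_pow 2)).deriv,
    ((hρx.rpow_const (Or.inl hρ0)).const_mul A).deriv,
    (hρδ.fun_mul (hux.differentiableAt_partial_right t x).hasDerivAt).deriv] at h
  have hγ1 : ρ t x ^ (γ - 1) = ρ t x ^ (γ - δ) * ρ t x ^ (δ - 2) * ρ t x := by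
    rw [← Real.rpow_add (hpos t x), ← Real.rpow_add_one hρ0]
    ring_nf
  have hδ1 : ρ t x ^ (δ - 1) = ρ t x ^ (δ - 2) * ρ t x := by
    rw [← Real.rpow_add_one hρ0]
    ring_nf
  have hδ : ρ t x ^ δ = ρ t x ^ (δ - 2) * ρ t x * ρ t x := by
    rw [← Real.rpow_add_one hρ0, ← Real.rpow_add_one hρ0]
    ring_nf
  apply mul_left_cancel₀ hρ0
  rw [hγ1, hδ1, hδ] at h
  linear_combination h - u t x * mass_equation_expanded hρ hu1 mass t x

theorem material_deriv_effective_velocity (hpos : ∀ t x, 0 < ρ t x)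
    (hρ : ContDiff ℝ 2 (uncurry ρ)) (hu : ContDiff ℝ 2 (uncurry u))
    (mass : ∀ t x, deriv (fun s => ρ s x) t + deriv (fun y => ρ t y * u t y) x = 0)
    (t x : ℝ) :
    deriv (fun s => u s x + α * ρ s x ^ (δ - 2) * deriv (fun z => ρ s z) x) t
      + u t x * deriv (fun y => u t y + α * ρ t y ^ (δ - 2) * deriv (fun z => ρ t z) y) x
      = deriv (fun s => u s x) t + u t x * deriv (fun y => u t y) x
        - α * δ * ρ t x ^ (δ - 2) * deriv (fun y => ρ t y) x * deriv (fun y => u t y) x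
        - α * ρ t x ^ (δ - 2) * ρ t x * deriv (fun y => deriv (fun z => u t z) y) x := by
  have hρ0 : ρ t x ≠ 0 := (hpos t x).ne'
  have hρ1 : Differentiable ℝ (uncurry ρ) := hρ.differentiable (by simp)
  have hu1 : Differentiable ℝ (uncurry u) := hu.differentiable (by simp)
  have hρx_diff := (hρ.contDiff_deriv_partial_right (n := 1)).differentiable (by simp)
  have hρ_t := (hρ1.differentiableAt_partial_left t x).hasDerivAt
  have hρ_x := (hρ1.differentiableAt_partial_right t x).hasDerivAt
  rw [((hu1.differentiableAt_partial_left t x).hasDerivAt.fun_add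
      (((hρ_t.rpow_const (Or.inl hρ0)).const_mul α).fun_mul
        (hρx_diff.differentiableAt_partial_left t x).hasDerivAt)).deriv,
    ((hu1.differentiableAt_partial_right t x).hasDerivAt.fun_add
      (((hρ_x.rpow_const (Or.inl hρ0)).const_mul α).fun_mul
        (hρx_diff.differentiableAt_partial_right t x).hasDerivAt)).deriv,
    hρ.deriv_partial_comm t x]
  have hδ : ρ t x ^ (δ - 2 - 1) * ρ t x = ρ t x ^ (δ - 2) := by
    rw [Real.rpow_sub_one hρ0, div_mul_cancel₀ _ hρ0]
  linear_combination α * (δ - 2) * ρ t x ^ (δ - 2 - 1) * deriv (fun y => ρ t y) x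
      * mass_equation_expanded hρ1 hu1 mass t x
    + α * ρ t x ^ (δ - 2) * deriv_right_mass_equation_expanded hρ hu mass t x
    - α * (δ - 2) * deriv (fun y => ρ t y) x * deriv (fun y => u t y) x * hδ

end NavierStokes

theorem effective_velocity_transport_general (A α γ δ : ℝ)
    (hα : 0 < α)
    (ρ u : ℝ → ℝ → ℝ)
    (hρ : ContDiff ℝ 2 (Function.uncurry ρ))
    (hu : ContDiff ℝ 2 (Function.uncurry u))
    (hpos : ∀ t x, 0 < ρ t x)
    (mass : ∀ t x, deriv (fun s => ρ s x) t
        + deriv (fun y => ρ t y * u t y) x = 0)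
    (mom : ∀ t x, deriv (fun s => ρ s x * u s x) t
        + deriv (fun y => ρ t y * u t y ^ 2) x
        + deriv (fun y => A * ρ t y ^ γ) x
        = deriv (fun y => α * ρ t y ^ δ * deriv (fun z => u t z) y) x) :
    ∀ t x,
      deriv (fun s => u s x + α * ρ s x ^ (δ - 2) * deriv (fun z => ρ s z) x) t
      + u t x *
        deriv (fun y => u t y + α * ρ t y ^ (δ - 2) * deriv (fun z => ρ t z) y) x
      + (A * γ / α) * ρ t x ^ (γ - δ) *
          (u t x + α * ρ t x ^ (δ - 2) * deriv (fun z => ρ t z) x)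
      = (A * γ / α) * ρ t x ^ (γ - δ) * u t x := by
  intro t x
  have hαα : A * γ / α * α = A * γ := div_mul_cancel₀ _ hα.ne'
  linear_combination
    material_deriv_effective_velocity (α := α) (δ := δ) hpos hρ hu mass t x
    + momentum_equation_nonconservative hpos (hρ.differentiable (by simp)) hu mass mom t x
    + ρ t x ^ (γ - δ) * ρ t x ^ (δ - 2) * deriv (fun z => ρ t z) x * hαα

/-- The effective velocity `v = u + α ρ^{δ-2} ρ_x` of a positive classical
solution of the 1-D isentropic compressible Navier–Stokes equations satisfies
`v_t + u v_x + (Aγ/α) ρ^{γ-δ} v = (Aγ/α) ρ^{γ-δ} u`. -/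
theorem effective_velocity_transport (A α γ δ : ℝ)
    (hA : 0 < A) (hα : 0 < α) (hγ : 1 < γ) (hδ0 : 0 < δ) (hδ1 : δ ≤ 1)
    (ρ u : ℝ → ℝ → ℝ)
    (hρ : ContDiff ℝ 2 (Function.uncurry ρ))
    (hu : ContDiff ℝ 2 (Function.uncurry u))
    (hpos : ∀ t x, 0 < ρ t x)
    (mass : ∀ t x, deriv (fun s => ρ s x) t
        + deriv (fun y => ρ t y * u t y) x = 0)
    (mom : ∀ t x, deriv (fun s => ρ s x * u s x) t
        + deriv (fun y => ρ t y * u t y ^ 2) x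
        + deriv (fun y => A * ρ t y ^ γ) x
        = deriv (fun y => α * ρ t y ^ δ * deriv (fun z => u t z) y) x) :
    ∀ t x,
      deriv (fun s => u s x + α * ρ s x ^ (δ - 2) * deriv (fun z => ρ s z) x) t
      + u t x *
        deriv (fun y => u t y + α * ρ t y ^ (δ - 2) * deriv (fun z => ρ t z) y) x
      + (A * γ / α) * ρ t x ^ (γ - δ) *
          (u t x + α * ρ t x ^ (δ - 2) * deriv (fun z => ρ t z) x)
      = (A * γ / α) * ρ t x ^ (γ - δ) * u t x :=
  effective_velocity_transport_general A α γ δ hα ρ u hρ hu hpos mass mom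
end

section
/- Let ρ, u be C² functions on [0,T] × ℝ with ρ > 0 satisfying the continuity equation ρ_t + (ρu)_x = 0, and let 0 < δ < 1. Then ψ := (δ/(δ−1)) (ρ^{δ−1})_x satisfies pointwise ψ_t + (uψ)_x + (δ−1) ψ u_x + δ ρ^{δ−1} u_{xx} = 0. -/
/-! With `w = ρ^(δ-1)`, the continuity equation turns into the transport equation
`w_t + u w_x + (δ-1) w u_x = 0`. Differentiating it in `x` and exchanging `∂ₓ∂ₜ = ∂ₜ∂ₓ` gives
the equation for `w_x`, and `ψ = δ/(δ-1) · w_x`. -/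

open Function

namespace TwoVariable

variable {F : ℝ → ℝ → ℝ} {t x : ℝ}

noncomputable def partialT (F : ℝ → ℝ → ℝ) (t x : ℝ) : ℝ := deriv (fun s => F s x) t

noncomputable def partialX (F : ℝ → ℝ → ℝ) (t x : ℝ) : ℝ := deriv (fun y => F t y) x

lemma partialT_eq_fderiv (hF : DifferentiableAt ℝ (uncurry F) (t, x)) :
    partialT F t x = fderiv ℝ (uncurry F) (t, x) (1, 0) :=
  (hF.hasFDerivAt.comp_hasDerivAt (f := fun s : ℝ => (s, x)) t
    ((hasDerivAt_id t).prodMk (hasDerivAt_const t x))).deriv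

lemma partialX_eq_fderiv (hF : DifferentiableAt ℝ (uncurry F) (t, x)) :
    partialX F t x = fderiv ℝ (uncurry F) (t, x) (0, 1) :=
  (hF.hasFDerivAt.comp_hasDerivAt (f := fun y : ℝ => (t, y)) x
    ((hasDerivAt_const x t).prodMk (hasDerivAt_id x))).deriv

lemma hasDerivAt_partialT (hF : DifferentiableAt ℝ (uncurry F) (t, x)) :
    HasDerivAt (fun s => F s x) (partialT F t x) t :=
  (hF.comp (f := fun s : ℝ => (s, x)) t
    (differentiableAt_id.prodMk (differentiableAt_const x))).hasDerivAt

lemma hasDerivAt_partialX (hF : DifferentiableAt ℝ (uncurry F) (t, x)) :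
    HasDerivAt (fun y => F t y) (partialX F t x) x :=
  (hF.comp (f := fun y : ℝ => (t, y)) x
    ((differentiableAt_const t).prodMk differentiableAt_id)).hasDerivAt

lemma uncurry_partialT (hF : Differentiable ℝ (uncurry F)) :
    uncurry (partialT F) = fun p => fderiv ℝ (uncurry F) p (1, 0) :=
  funext fun p => partialT_eq_fderiv (hF p)

lemma uncurry_partialX (hF : Differentiable ℝ (uncurry F)) :
    uncurry (partialX F) = fun p => fderiv ℝ (uncurry F) p (0, 1) :=
  funext fun p => partialX_eq_fderiv (hF p)

section Smoothness

variable {m n : WithTop ℕ∞}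

lemma contDiff_partialT (hF : ContDiff ℝ n (uncurry F)) (hmn : m + 1 ≤ n) :
    ContDiff ℝ m (uncurry (partialT F)) := by
  rw [uncurry_partialT ((hF.of_le (le_add_self.trans hmn)).differentiable one_ne_zero)]
  exact (hF.fderiv_right hmn).clm_apply contDiff_const

lemma contDiff_partialX (hF : ContDiff ℝ n (uncurry F)) (hmn : m + 1 ≤ n) :
    ContDiff ℝ m (uncurry (partialX F)) := by
  rw [uncurry_partialX ((hF.of_le (le_add_self.trans hmn)).differentiable one_ne_zero)]
  exact (hF.fderiv_right hmn).clm_apply contDiff_const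

end Smoothness

lemma partialT_partialX_comm (hF : ContDiff ℝ 2 (uncurry F)) (t x : ℝ) :
    partialT (partialX F) t x = partialX (partialT F) t x := by
  have hF1 : Differentiable ℝ (uncurry F) := hF.differentiable (by norm_num)
  have hD : DifferentiableAt ℝ (fderiv ℝ (uncurry F)) (t, x) :=
    ((hF.fderiv_right (m := 1) (by norm_num)).differentiable one_ne_zero) (t, x)
  have hTX := (contDiff_partialX hF (m := 1) (by norm_num)).differentiable one_ne_zero (t, x)
  have hXT := (contDiff_partialT hF (m := 1) (by norm_num)).differentiable one_ne_zero (t, x)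
  rw [partialT_eq_fderiv hTX, partialX_eq_fderiv hXT, uncurry_partialX hF1, uncurry_partialT hF1,
    fderiv_clm_apply hD (differentiableAt_const _), fderiv_clm_apply hD (differentiableAt_const _)]
  simpa using (hF.contDiffAt (x := (t, x)).isSymmSndFDerivAt (by simp)).eq (1, 0) (0, 1)

end TwoVariable

open TwoVariable

lemma transport_rpow_of_continuity {ρ u : ℝ → ℝ → ℝ} (hρ : Differentiable ℝ (uncurry ρ))
    (hu : Differentiable ℝ (uncurry u)) (hne : ∀ t x, ρ t x ≠ 0)
    (mass : ∀ t x, partialT ρ t x + partialX (fun t y => ρ t y * u t y) t x = 0)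
    (p t x : ℝ) :
    partialT (fun t x => ρ t x ^ p) t x + u t x * partialX (fun t x => ρ t x ^ p) t x
      + p * ρ t x ^ p * partialX u t x = 0 := by
  have hρx := hasDerivAt_partialX (hρ (t, x))
  have hflux : partialX (fun t y => ρ t y * u t y) t x
      = partialX ρ t x * u t x + ρ t x * partialX u t x :=
    (hρx.mul (hasDerivAt_partialX (hu (t, x)))).deriv
  have hpow_t : partialT (fun t x => ρ t x ^ p) t x = partialT ρ t x * p * ρ t x ^ (p - 1) :=
    ((hasDerivAt_partialT (hρ (t, x))).rpow_const (Or.inl (hne t x))).deriv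
  have hpow_x : partialX (fun t x => ρ t x ^ p) t x = partialX ρ t x * p * ρ t x ^ (p - 1) :=
    (hρx.rpow_const (Or.inl (hne t x))).deriv
  have hpow : ρ t x ^ p = ρ t x ^ (p - 1) * ρ t x := by
    rw [← Real.rpow_add_one (hne t x), sub_add_cancel]
  rw [hpow_t, hpow_x, hpow]
  linear_combination p * ρ t x ^ (p - 1) * (mass t x - hflux)

lemma transport_partialX {w u : ℝ → ℝ → ℝ} (hw : ContDiff ℝ 2 (uncurry w))
    (hu : ContDiff ℝ 2 (uncurry u)) (p : ℝ)
    (transport : ∀ t x, partialT w t x + u t x * partialX w t x + p * w t x * partialX u t x = 0)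
    (t x : ℝ) :
    partialT (partialX w) t x + partialX (fun t y => u t y * partialX w t y) t x
      + p * partialX w t x * partialX u t x + p * w t x * partialX (partialX u) t x = 0 := by
  have hw1 : Differentiable ℝ (uncurry w) := hw.differentiable (by norm_num)
  have hu1 : Differentiable ℝ (uncurry u) := hu.differentiable (by norm_num)
  have hwt := (contDiff_partialT hw (m := 1) (by norm_num)).differentiable one_ne_zero
  have hwx := (contDiff_partialX hw (m := 1) (by norm_num)).differentiable one_ne_zero
  have hux := (contDiff_partialX hu (m := 1) (by norm_num)).differentiable one_ne_zero
  have hflux : partialX (fun t y => u t y * partialX w t y) t x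
      = partialX u t x * partialX w t x + u t x * partialX (partialX w) t x :=
    ((hasDerivAt_partialX (hu1 (t, x))).mul (hasDerivAt_partialX (hwx (t, x)))).deriv
  have hexpand : partialX (fun t y => partialT w t y + u t y * partialX w t y
      + p * w t y * partialX u t y) t x
      = partialX (partialT w) t x
        + (partialX u t x * partialX w t x + u t x * partialX (partialX w) t x)
        + (p * partialX w t x * partialX u t x + p * w t x * partialX (partialX u) t x) :=
    (((hasDerivAt_partialX (hwt (t, x))).add
      ((hasDerivAt_partialX (hu1 (t, x))).mul (hasDerivAt_partialX (hwx (t, x))))).add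
      (((hasDerivAt_partialX (hw1 (t, x))).const_mul p).mul
        (hasDerivAt_partialX (hux (t, x))))).deriv
  have hzero : partialX (fun t y => partialT w t y + u t y * partialX w t y
      + p * w t y * partialX u t y) t x = 0 := by
    rw [partialX]
    simp only [transport, deriv_const']
  rw [partialT_partialX_comm hw, hflux]
  linear_combination hexpand.symm.trans hzero

theorem psi_transport_equation_general (δ : ℝ) (hδ1 : δ < 1)
    (ρ u ψ : ℝ → ℝ → ℝ)
    (hρ : ContDiff ℝ 2 (Function.uncurry ρ))
    (hu : ContDiff ℝ 2 (Function.uncurry u))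
    (hpos : ∀ t x, 0 < ρ t x)
    (hψ : ∀ t x, ψ t x = (δ / (δ - 1)) * deriv (fun y => ρ t y ^ (δ - 1)) x)
    (mass : ∀ t x, deriv (fun s => ρ s x) t
        + deriv (fun y => ρ t y * u t y) x = 0) :
    ∀ t x,
      deriv (fun s => ψ s x) t
      + deriv (fun y => u t y * ψ t y) x
      + (δ - 1) * ψ t x * deriv (fun y => u t y) x
      + δ * ρ t x ^ (δ - 1) * deriv (fun y => deriv (fun z => u t z) y) x
      = 0 := by
  intro t x
  have hw : ContDiff ℝ 2 (uncurry fun t x => ρ t x ^ (δ - 1)) :=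
    hρ.rpow_const_of_ne fun p => (hpos p.1 p.2).ne'
  have key := transport_partialX hw hu (δ - 1)
    (transport_rpow_of_continuity (hρ.differentiable (by norm_num))
      (hu.differentiable (by norm_num)) (fun t x => (hpos t x).ne') mass (δ - 1)) t x
  simp only [partialT, partialX] at key
  simp only [hψ, mul_left_comm (u t _), deriv_const_mul_field']
  have hδ : δ - 1 ≠ 0 := by linarith
  field_simp
  linear_combination δ * key

/-- If `ρ > 0` solves the continuity equation and `0 < δ < 1`, then
`ψ = (δ/(δ-1)) (ρ^{δ-1})_x` satisfies
`ψ_t + (uψ)_x + (δ-1) ψ u_x + δ ρ^{δ-1} u_{xx} = 0`. -/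
theorem psi_transport_equation (δ : ℝ) (hδ0 : 0 < δ) (hδ1 : δ < 1)
    (ρ u ψ : ℝ → ℝ → ℝ)
    (hρ : ContDiff ℝ 2 (Function.uncurry ρ))
    (hu : ContDiff ℝ 2 (Function.uncurry u))
    (hpos : ∀ t x, 0 < ρ t x)
    (hψ : ∀ t x, ψ t x = (δ / (δ - 1)) * deriv (fun y => ρ t y ^ (δ - 1)) x)
    (mass : ∀ t x, deriv (fun s => ρ s x) t
        + deriv (fun y => ρ t y * u t y) x = 0) :
    ∀ t x,
      deriv (fun s => ψ s x) t
      + deriv (fun y => u t y * ψ t y) x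
      + (δ - 1) * ψ t x * deriv (fun y => u t y) x
      + δ * ρ t x ^ (δ - 1) * deriv (fun y => deriv (fun z => u t z) y) x
      = 0 :=
  psi_transport_equation_general δ hδ1 ρ u ψ hρ hu hpos hψ mass
end
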